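/- Let n ≥ d ≥ 1 and let f = Σ_{I ⊆ [n], |I| = d} f_I ∏_{i ∈ I} x_i be a square-free (multilinear) homogeneous polynomial of degree d with real coefficients, and let r ≥ d be an integer. Then f_{Δ(n,r)} − f_min^{(r−d)} ≤ (r^d / r^{(d)} − 1) (f̄ − f̲). -/

import Mathlib

open Finset

noncomputable section

/-- Falling factorial `t^(d) = t (t-1) ⋯ (t-d+1)`. -/
def fall (t : ℝ) : ℕ → ℝ
  | 0 => 1
  | d + 1 => fall t d * (t - (d : ℝ))

/-- The regular grid `Δ(n,r) = {x ∈ Δ_n : r·x ∈ ℕ^n}`. -/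
def regularGrid (n r : ℕ) : Set (Fin n → ℝ) :=
  {x ∈ stdSimplex ℝ (Fin n) | ∀ i, ∃ k : ℕ, (r : ℝ) * x i = (k : ℝ)}

/-- `f_{Δ(n,r)}`, the minimum of `f` over the regular grid. -/
def minGrid (n r : ℕ) (f : (Fin n → ℝ) → ℝ) : ℝ :=
  sInf (f '' regularGrid n r)

/-- `f̲`, the minimum of `f` over the standard simplex. -/
def minSimplex (n : ℕ) (f : (Fin n → ℝ) → ℝ) : ℝ :=
  sInf (f '' stdSimplex ℝ (Fin n))

/-- `f̄`, the maximum of `f` over the standard simplex. -/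
def maxSimplex (n : ℕ) (f : (Fin n → ℝ) → ℝ) : ℝ :=
  sSup (f '' stdSimplex ℝ (Fin n))

/-- The square-free (multilinear) polynomial `f = Σ_{I ⊆ [n], |I| = d} f_I Π_{i ∈ I} x_i`. -/
def sqfreePoly (n d : ℕ) (c : Finset (Fin n) → ℝ) (x : Fin n → ℝ) : ℝ :=
  ∑ I ∈ Finset.univ.powersetCard d, c I * ∏ i ∈ I, x i

/-- The Pólya-type lower bound `f_min^{(r-d)} = min_{α ∈ I(n,r)} Σ_β f_β α^{(β)} / r^{(d)}`
spelled out for the square-free polynomial `sqfreePoly` (here `α^{(β)} = Π_{i ∈ I} α_i`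
when `β` is the indicator vector of `I`). -/
def sqfreePolya (n d r : ℕ) (c : Finset (Fin n) → ℝ) : ℝ :=
  sInf ((fun α : Fin n → ℕ =>
      (∑ I ∈ Finset.univ.powersetCard d, c I * ∏ i ∈ I, ((α i : ℕ) : ℝ)) / fall (r : ℝ) d) ''
    {α : Fin n → ℕ | ∑ i, α i = r})

/-!
For a square-free monomial the falling factorial `α^{(β)}` is the plain product `∏_{i ∈ I} α_i`,
so substituting `α = r x` shows that the Pólya bound is `λ · f_{Δ(n,r)}` with
`λ = r^d / r^{(d)} ≥ 1`. The left-hand side is therefore `(λ - 1)(-f_{Δ(n,r)})`, and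
`-f_{Δ(n,r)} ≤ -f̲ ≤ f̄ - f̲` because for `d ≥ 2` the polynomial vanishes at the vertices of the
simplex, so `f̄ ≥ 0`. For `d = 1` we have `λ = 1` and both sides vanish.
-/

lemma fall_one (t : ℝ) : fall t 1 = t := by
  simp [fall]

lemma fall_pos {t : ℝ} {d : ℕ} (h : (d : ℝ) - 1 < t) : 0 < fall t d := by
  induction d with
  | zero => simp [fall]
  | succ k ih =>
    push_cast at h
    exact mul_pos (ih (by linarith)) (by linarith)

lemma fall_le_pow {t : ℝ} {d : ℕ} (ht : 0 ≤ t) (h : (d : ℝ) - 1 ≤ t) : fall t d ≤ t ^ d := by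
  induction d with
  | zero => simp [fall]
  | succ k ih =>
    push_cast at h
    calc fall t k * (t - k) ≤ t ^ k * t :=
          mul_le_mul (ih (by linarith)) (by linarith) (by linarith) (by positivity)
      _ = t ^ (k + 1) := (pow_succ t k).symm

lemma single_mem_regularGrid (n r : ℕ) (i : Fin n) : Pi.single i 1 ∈ regularGrid n r := by
  refine ⟨single_mem_stdSimplex ℝ i, fun j => ?_⟩
  by_cases hj : j = i
  · exact ⟨r, by simp [hj]⟩
  · exact ⟨0, by simp [hj]⟩

lemma regularGrid_eq_image {n r : ℕ} (hr : r ≠ 0) :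
    regularGrid n r = (fun (α : Fin n → ℕ) i => (α i : ℝ) / r) '' {α | ∑ i, α i = r} := by
  have hr' : (r : ℝ) ≠ 0 := Nat.cast_ne_zero.mpr hr
  ext x
  constructor
  · rintro ⟨⟨-, hsum⟩, hint⟩
    choose α hα using hint
    refine ⟨α, ?_, funext fun i => by simp only [← hα i]; field_simp⟩
    have : ((∑ i, α i : ℕ) : ℝ) = r := by
      push_cast
      simp_rw [← hα, ← Finset.mul_sum, hsum, mul_one]
    exact_mod_cast this
  · rintro ⟨α, hα, rfl⟩
    refine ⟨⟨fun i => by positivity, ?_⟩, fun i => ⟨α i, by field_simp⟩⟩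
    rw [← Finset.sum_div, ← Nat.cast_sum, hα, div_self hr']

lemma sqfreePoly_div_const (n d : ℕ) (c : Finset (Fin n) → ℝ) (x : Fin n → ℝ) (s : ℝ) :
    sqfreePoly n d c (fun i => x i / s) = sqfreePoly n d c x / s ^ d := by
  rw [sqfreePoly, sqfreePoly, Finset.sum_div]
  refine Finset.sum_congr rfl fun I hI => ?_
  rw [Finset.prod_div_distrib, Finset.prod_const, (Finset.mem_powersetCard.mp hI).2, mul_div_assoc]

lemma sqfreePolya_eq {n d r : ℕ} (c : Finset (Fin n) → ℝ) (hr : r ≠ 0) (hdr : d ≤ r) :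
    sqfreePolya n d r c = ((r : ℝ) ^ d / fall (r : ℝ) d) * minGrid n r (sqfreePoly n d c) := by
  have hfall : 0 < fall (r : ℝ) d := fall_pos (by
    have : (d : ℝ) ≤ r := by exact_mod_cast hdr
    linarith)
  have hr' : (r : ℝ) ≠ 0 := Nat.cast_ne_zero.mpr hr
  rw [minGrid, regularGrid_eq_image hr, Set.image_image, ← smul_eq_mul,
    ← Real.sInf_smul_of_nonneg (by positivity), ← Set.image_smul, Set.image_image, sqfreePolya]
  refine congrArg sInf (Set.image_congr fun α _ => ?_)
  rw [smul_eq_mul, sqfreePoly_div_const, sqfreePoly]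
  field_simp

lemma continuous_sqfreePoly (n d : ℕ) (c : Finset (Fin n) → ℝ) : Continuous (sqfreePoly n d c) := by
  unfold sqfreePoly
  fun_prop

lemma sqfreePoly_single_eq_zero {n d : ℕ} (hd : 2 ≤ d) (c : Finset (Fin n) → ℝ) (i : Fin n) :
    sqfreePoly n d c (Pi.single i 1) = 0 := by
  refine Finset.sum_eq_zero fun I hI => ?_
  obtain ⟨j, hjI, hji⟩ :=
    Finset.exists_mem_ne (by rw [(Finset.mem_powersetCard.mp hI).2]; omega) i
  rw [Finset.prod_eq_zero hjI (Pi.single_eq_of_ne hji 1), mul_zero]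

section Extrema

variable {n : ℕ} {f : (Fin n → ℝ) → ℝ}

lemma le_maxSimplex (hf : Continuous f) {x : Fin n → ℝ} (hx : x ∈ stdSimplex ℝ (Fin n)) :
    f x ≤ maxSimplex n f :=
  le_csSup ((isCompact_stdSimplex ℝ (Fin n)).image hf).bddAbove (Set.mem_image_of_mem f hx)

lemma minSimplex_le_minGrid (hf : Continuous f) (hn : 0 < n) (r : ℕ) :
    minSimplex n f ≤ minGrid n r f :=
  csInf_le_csInf ((isCompact_stdSimplex ℝ (Fin n)).image hf).bddBelow
    ⟨_, Set.mem_image_of_mem f (single_mem_regularGrid n r ⟨0, hn⟩)⟩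
    (Set.image_mono fun _ hx => hx.1)

end Extrema

/-- for a square-free `f` of degree `d`, `1 ≤ d ≤ n` and `r ≥ d`,
`f_{Δ(n,r)} − f_min^{(r−d)} ≤ (r^d/r^{(d)} − 1)(f̄ − f̲)`. -/
theorem statement9 (n d r : ℕ) (hd : 1 ≤ d) (hdn : d ≤ n) (hr : d ≤ r)
    (c : Finset (Fin n) → ℝ) :
    minGrid n r (sqfreePoly n d c) - sqfreePolya n d r c ≤
      ((r : ℝ) ^ d / fall (r : ℝ) d - 1) *
        (maxSimplex n (sqfreePoly n d c) - minSimplex n (sqfreePoly n d c)) := by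
  have hr0 : r ≠ 0 := by omega
  have hdr : (d : ℝ) ≤ r := by exact_mod_cast hr
  have hfall : 0 < fall (r : ℝ) d := fall_pos (by linarith)
  have hscale : 1 ≤ (r : ℝ) ^ d / fall (r : ℝ) d :=
    (one_le_div hfall).mpr (fall_le_pow (by positivity) (by linarith))
  have hf := continuous_sqfreePoly n d c
  rw [sqfreePolya_eq c hr0 hr]
  obtain rfl | hd2 := hd.eq_or_lt
  · simp [fall_one, hr0]
  have hmax : 0 ≤ maxSimplex n (sqfreePoly n d c) :=
    sqfreePoly_single_eq_zero hd2 c ⟨0, by omega⟩ ▸ le_maxSimplex hf (single_mem_stdSimplex ℝ _)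
  have hmin := minSimplex_le_minGrid hf (by omega : 0 < n) r
  calc _ = ((r : ℝ) ^ d / fall (r : ℝ) d - 1) * -minGrid n r (sqfreePoly n d c) := by ring
    _ ≤ _ := mul_le_mul_of_nonneg_left (by linarith) (by linarith)
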